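/- L_q-error of the empirical mean absolute deviation: Let 1 = p < q ≤ 2, K ≥ 1, and let Y ∈ 𝒴_{1,q,K} with ρ := ‖Y − E Y‖_1. Let Y_1, …, Y_m be i.i.d. copies of Y, M̂_m := (1/m)·Σ_{i=1}^m Y_i and R̂_m := (1/m)·Σ_{i=1}^m |Y_i − M̂_m|. Then ‖R̂_m − ρ‖_q ≤ 2^{2/q−1}·(1+2K)·m^{−(1−1/q)}·ρ ≤ 6K·m^{−(1−1/q)}·ρ. -/

import Mathlib

/-!
Pointwise, `|R̂_m - ρ| ≤ |M̂_m - E Y| + |(1/m) ∑ (|Y_i - E Y| - ρ)|`, since replacing `M̂_m` by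
`E Y` moves each `|Y_i - M̂_m|` by at most `|M̂_m - E Y|`. Both terms on the right are means of
i.i.d. centered variables, whose `L_q`-norms are at most `Kρ` and `(1 + K)ρ` by the cone condition.
Such means are controlled by the von Bahr–Esseen inequality
`E|∑ X_i|^q ≤ 2^(2-q) ∑ E|X_i|^q` for independent centered `X_i` and `1 < q ≤ 2`, which follows by
induction from the pointwise bound `|a + x|^q ≤ |a|^q + q sign(a) |a|^(q-1) x + 2^(2-q) |x|^q`:
the middle term has expectation zero when `x` is centered and independent of `a`.
-/

open MeasureTheory ProbabilityTheory ENNReal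

lemma Real.rpow_sub_rpow_le_sub_rpow {r : ℝ} (hr0 : 0 ≤ r) (hr1 : r ≤ 1) {x y : ℝ}
    (hy : 0 ≤ y) (hyx : y ≤ x) : x ^ r - y ^ r ≤ (x - y) ^ r := by
  have := Real.rpow_add_le_add_rpow (sub_nonneg.2 hyx) hy hr0 hr1
  rw [sub_add_cancel] at this
  linarith

lemma Real.rpow_add_rpow_le_two_rpow_mul {r : ℝ} (hr0 : 0 ≤ r) (hr1 : r ≤ 1) {x y : ℝ}
    (hx : 0 ≤ x) (hy : 0 ≤ y) : x ^ r + y ^ r ≤ 2 ^ (1 - r) * (x + y) ^ r := by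
  have h := (Real.concaveOn_rpow hr0 hr1).2 hx hy (by norm_num : (0:ℝ) ≤ 1/2)
    (by norm_num : (0:ℝ) ≤ 1/2) (by norm_num)
  simp only [smul_eq_mul, ← mul_add] at h
  rw [Real.mul_rpow (by norm_num) (add_nonneg hx hy), Real.rpow_sub two_pos, Real.rpow_one,
    one_div, Real.inv_rpow zero_le_two] at *
  have h2 : (0:ℝ) < 2 ^ r := by positivity
  field_simp at h ⊢
  linarith

/-- `sign x * |x| ^ r`; the form `|x| ^ (r - 1) * x` is that of `hasDerivAt_abs_rpow`, and the
value at `0` is `0` for every `r`. -/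
noncomputable def signedRpow (r x : ℝ) : ℝ := |x| ^ (r - 1) * x

lemma signedRpow_of_nonneg {r : ℝ} (hr : 0 < r) {x : ℝ} (hx : 0 ≤ x) :
    signedRpow r x = x ^ r := by
  rcases hx.eq_or_lt with rfl | hx
  · simp [signedRpow, Real.zero_rpow hr.ne']
  · rw [signedRpow, abs_of_pos hx, Real.rpow_sub_one hx.ne', div_mul_cancel₀ _ hx.ne']

lemma signedRpow_neg (r x : ℝ) : signedRpow r (-x) = -signedRpow r x := by
  simp [signedRpow]

lemma signedRpow_of_nonpos {r : ℝ} (hr : 0 < r) {x : ℝ} (hx : x ≤ 0) :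
    signedRpow r x = -(-x) ^ r := by
  rw [← signedRpow_of_nonneg hr (neg_nonneg.2 hx), signedRpow_neg, neg_neg]

lemma measurable_signedRpow (r : ℝ) : Measurable (signedRpow r) := by
  unfold signedRpow; fun_prop

lemma abs_signedRpow {r : ℝ} (hr : 0 < r) (x : ℝ) : |signedRpow r x| = |x| ^ r := by
  rw [← signedRpow_of_nonneg hr (abs_nonneg x), signedRpow, signedRpow, abs_mul, abs_abs,
    abs_of_nonneg (Real.rpow_nonneg (abs_nonneg x) _)]

lemma hasDerivAt_abs_rpow_signedRpow {q : ℝ} (hq : 1 < q) (x : ℝ) :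
    HasDerivAt (fun t => |t| ^ q) (q * signedRpow (q - 1) x) x := by
  convert hasDerivAt_abs_rpow x hq using 1
  rw [signedRpow, sub_sub, one_add_one_eq_two, mul_assoc]

lemma signedRpow_sub_le {r : ℝ} (hr0 : 0 < r) (hr1 : r ≤ 1) {x y : ℝ} (hyx : y ≤ x) :
    signedRpow r x - signedRpow r y ≤ 2 ^ (1 - r) * (x - y) ^ r := by
  have hone : (1:ℝ) ≤ 2 ^ (1 - r) := Real.one_le_rpow one_le_two (by linarith)
  have hpow : 0 ≤ (x - y) ^ r := Real.rpow_nonneg (sub_nonneg.2 hyx) r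
  have hscale : (x - y) ^ r ≤ 2 ^ (1 - r) * (x - y) ^ r := le_mul_of_one_le_left hpow hone
  rcases le_total 0 y with hy | hy
  · rw [signedRpow_of_nonneg hr0 hy, signedRpow_of_nonneg hr0 (hy.trans hyx)]
    linarith [Real.rpow_sub_rpow_le_sub_rpow hr0.le hr1 hy hyx]
  rw [signedRpow_of_nonpos hr0 hy]
  rcases le_total 0 x with hx | hx
  · rw [signedRpow_of_nonneg hr0 hx, sub_neg_eq_add, sub_eq_add_neg]
    exact Real.rpow_add_rpow_le_two_rpow_mul hr0.le hr1 hx (neg_nonneg.2 hy)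
  · rw [signedRpow_of_nonpos hr0 hx]
    have := Real.rpow_sub_rpow_le_sub_rpow hr0.le hr1 (neg_nonneg.2 hx) (neg_le_neg hyx)
    rw [neg_sub_neg] at this
    linarith

lemma abs_add_rpow_le_of_nonneg {q : ℝ} (hq1 : 1 < q) (hq2 : q ≤ 2) (a : ℝ) {x : ℝ}
    (hx : 0 ≤ x) :
    |a + x| ^ q ≤ |a| ^ q + q * signedRpow (q - 1) a * x + 2 ^ (2 - q) * x ^ q := by
  -- `g` vanishes at `0` and is monotone on `[0, ∞)`: its derivative is nonnegative by the Hölder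
  -- bound `signedRpow_sub_le` for the derivative `q * signedRpow (q - 1)` of `|·| ^ q`.
  set g : ℝ → ℝ := fun t => |a| ^ q + q * signedRpow (q - 1) a * t + 2 ^ (2 - q) * t ^ q
    - |a + t| ^ q
  set g' : ℝ → ℝ := fun t => q * signedRpow (q - 1) a + 2 ^ (2 - q) * (q * t ^ (q - 1))
    - q * signedRpow (q - 1) (a + t)
  have hderiv (t : ℝ) : HasDerivAt g (g' t) t := by
    have h1 := (hasDerivAt_id t).const_mul (q * signedRpow (q - 1) a)
    have h2 := (Real.hasDerivAt_rpow_const (x := t) (Or.inr hq1.le)).const_mul (2 ^ (2 - q))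
    have h3 := (hasDerivAt_abs_rpow_signedRpow hq1 (a + t)).comp_const_add a t
    have := ((h1.const_add (|a| ^ q)).add h2).sub h3
    simp only [id, mul_one] at this
    exact this
  have hg'_nonneg (t : ℝ) (ht : t ∈ interior (Set.Ici 0)) : 0 ≤ g' t := by
    rw [interior_Ici] at ht
    have := signedRpow_sub_le (by linarith : 0 < q - 1) (by linarith)
      (le_add_of_nonneg_right ht.out.le) (x := a + t) (y := a)
    rw [add_sub_cancel_left, show 1 - (q - 1) = 2 - q by ring] at this
    have := mul_le_mul_of_nonneg_left this (by linarith : 0 ≤ q)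
    simp only [g']
    linarith
  have hmono : MonotoneOn g (Set.Ici 0) :=
    monotoneOn_of_hasDerivWithinAt_nonneg (convex_Ici 0)
      (fun t _ => (hderiv t).continuousAt.continuousWithinAt)
      (fun t _ => (hderiv t).hasDerivWithinAt) hg'_nonneg
  have hg0 : g 0 = 0 := by simp [g, Real.zero_rpow (by linarith : q ≠ 0)]
  have := hmono Set.self_mem_Ici hx hx
  rw [hg0] at this
  linarith

lemma abs_add_rpow_le {q : ℝ} (hq1 : 1 < q) (hq2 : q ≤ 2) (a x : ℝ) :
    |a + x| ^ q ≤ |a| ^ q + q * signedRpow (q - 1) a * x + 2 ^ (2 - q) * |x| ^ q := by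
  rcases le_total 0 x with hx | hx
  · rw [abs_of_nonneg hx]
    exact abs_add_rpow_le_of_nonneg hq1 hq2 a hx
  · have := abs_add_rpow_le_of_nonneg hq1 hq2 (-a) (neg_nonneg.2 hx)
    rwa [← neg_add, abs_neg, abs_neg, signedRpow_neg,
      show q * -signedRpow (q - 1) a * -x = q * signedRpow (q - 1) a * x by ring,
      ← abs_of_nonpos hx] at this

lemma MeasureTheory.MemLp.eLpNorm_le_ofReal_iff {Ω : Type*} [MeasurableSpace Ω]
    {μ : Measure Ω} {q : ℝ} (hq0 : 0 < q) {f : Ω → ℝ} (hf : MemLp f (ENNReal.ofReal q) μ)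
    {B : ℝ} (hB : 0 ≤ B) :
    eLpNorm f (ENNReal.ofReal q) μ ≤ ENNReal.ofReal B ↔ ∫ ω, |f ω| ^ q ∂μ ≤ B ^ q := by
  rw [hf.eLpNorm_eq_integral_rpow_norm (by simpa using hq0) ENNReal.ofReal_ne_top,
    ENNReal.ofReal_le_ofReal_iff hB, ENNReal.toReal_ofReal hq0.le]
  exact Real.rpow_inv_le_iff_of_pos (integral_nonneg fun ω => by positivity) hB hq0

lemma MeasureTheory.Integrable.toReal_eLpNorm_one {Ω : Type*} [MeasurableSpace Ω]
    {μ : Measure Ω} {f : Ω → ℝ} (hf : Integrable f μ) :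
    (eLpNorm f 1 μ).toReal = ∫ ω, |f ω| ∂μ := by
  rw [eLpNorm_one_eq_lintegral_enorm, ← integral_norm_eq_lintegral_enorm hf.aestronglyMeasurable]
  rfl

lemma eLpNorm_abs_sub_const_le {Ω : Type*} [MeasurableSpace Ω] {μ : Measure Ω}
    [IsProbabilityMeasure μ] {p : ℝ≥0∞} (hp : 1 ≤ p) {f : Ω → ℝ}
    (hf : AEStronglyMeasurable f μ) (a : ℝ) :
    eLpNorm (fun ω => |f ω| - a) p μ ≤ eLpNorm f p μ + ‖a‖ₑ := by
  calc eLpNorm (fun ω => |f ω| - a) p μ ≤ eLpNorm (fun ω => ‖f ω‖) p μ + eLpNorm (fun _ => a) p μ :=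
        eLpNorm_sub_le hf.norm aestronglyMeasurable_const hp
    _ = eLpNorm f p μ + ‖a‖ₑ := by
        rw [eLpNorm_norm, eLpNorm_const a (by positivity) (NeZero.ne μ)]
        simp

lemma eLpNorm_le_add_of_abs_le {Ω : Type*} [MeasurableSpace Ω] {μ : Measure Ω} {p : ℝ≥0∞}
    (hp : 1 ≤ p) {f g h : Ω → ℝ} (hg : AEStronglyMeasurable g μ) (hh : AEStronglyMeasurable h μ)
    (hfgh : ∀ ω, |f ω| ≤ |g ω| + |h ω|) :
    eLpNorm f p μ ≤ eLpNorm g p μ + eLpNorm h p μ := by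
  calc eLpNorm f p μ ≤ eLpNorm (fun ω => ‖g ω‖ + ‖h ω‖) p μ := eLpNorm_mono_real hfgh
    _ ≤ eLpNorm (fun ω => ‖g ω‖) p μ + eLpNorm (fun ω => ‖h ω‖) p μ :=
        eLpNorm_add_le hg.norm hh.norm hp
    _ = eLpNorm g p μ + eLpNorm h p μ := by rw [eLpNorm_norm, eLpNorm_norm]

section Moments

variable {Ω : Type*} [MeasurableSpace Ω] {μ : Measure Ω} [IsProbabilityMeasure μ] {q : ℝ}

lemma integrable_signedRpow_comp (hq1 : 1 < q) {U : Ω → ℝ} (hU : MemLp U (ENNReal.ofReal q) μ) :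
    Integrable (fun ω => signedRpow (q - 1) (U ω)) μ := by
  have hU' := (hU.mono_exponent (ENNReal.ofReal_le_ofReal (sub_le_self q zero_le_one)))
    |>.integrable_norm_rpow (by simpa using hq1) ENNReal.ofReal_ne_top
  refine hU'.mono'
    ((measurable_signedRpow _).comp_aemeasurable hU.aemeasurable).aestronglyMeasurable
    (ae_of_all _ fun ω => ?_)
  rw [Real.norm_eq_abs, abs_signedRpow (by linarith), ENNReal.toReal_ofReal (by linarith),
    Real.norm_eq_abs]

lemma integral_abs_add_rpow_le_of_indepFun (hq1 : 1 < q) (hq2 : q ≤ 2) {U V : Ω → ℝ}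
    (hU : MemLp U (ENNReal.ofReal q) μ) (hV : MemLp V (ENNReal.ofReal q) μ)
    (hUV : IndepFun U V μ) (hV0 : ∫ ω, V ω ∂μ = 0) :
    ∫ ω, |U ω + V ω| ^ q ∂μ ≤ ∫ ω, |U ω| ^ q ∂μ + 2 ^ (2 - q) * ∫ ω, |V ω| ^ q ∂μ := by
  have hq0 : 0 < q := by linarith
  have hpow {W : Ω → ℝ} (hW : MemLp W (ENNReal.ofReal q) μ) :
      Integrable (fun ω => |W ω| ^ q) μ := by
    simpa [hq0.le] using hW.integrable_norm_rpow (by simpa using hq0) ENNReal.ofReal_ne_top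
  have hφU := integrable_signedRpow_comp hq1 hU
  have hφUV : IndepFun (fun ω => signedRpow (q - 1) (U ω)) V μ :=
    hUV.comp (measurable_signedRpow _) measurable_id
  have hcross : Integrable (fun ω => signedRpow (q - 1) (U ω) * V ω) μ :=
    hφUV.integrable_mul hφU (hV.integrable (by simpa using hq1.le))
  have hcross0 : ∫ ω, signedRpow (q - 1) (U ω) * V ω ∂μ = 0 := by
    rw [hφUV.integral_fun_mul_eq_mul_integral hφU.aestronglyMeasurable hV.aestronglyMeasurable,
      hV0, mul_zero]
  calc ∫ ω, |U ω + V ω| ^ q ∂μ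
      ≤ ∫ ω, (|U ω| ^ q + q * (signedRpow (q - 1) (U ω) * V ω) + 2 ^ (2 - q) * |V ω| ^ q) ∂μ :=
        integral_mono (hpow (hU.add hV))
          (((hpow hU).add (hcross.const_mul q)).add ((hpow hV).const_mul _))
          fun ω => by simpa only [mul_assoc] using abs_add_rpow_le hq1 hq2 (U ω) (V ω)
    _ = ∫ ω, |U ω| ^ q ∂μ + 2 ^ (2 - q) * ∫ ω, |V ω| ^ q ∂μ := by
        have hsum : Integrable (fun ω => |U ω| ^ q + q * (signedRpow (q - 1) (U ω) * V ω)) μ :=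
          (hpow hU).add (hcross.const_mul q)
        rw [integral_add hsum ((hpow hV).const_mul _),
          integral_add (hpow hU) (hcross.const_mul q), integral_const_mul, integral_const_mul,
          hcross0, mul_zero, add_zero]

lemma integral_abs_sum_rpow_le_of_iIndepFun {ι : Type*} (hq1 : 1 < q) (hq2 : q ≤ 2)
    {X : ι → Ω → ℝ}
    (hX : ∀ i, MemLp (X i) (ENNReal.ofReal q) μ) (hX0 : ∀ i, ∫ ω, X i ω ∂μ = 0)
    (hind : iIndepFun X μ) (s : Finset ι) :
    ∫ ω, |∑ i ∈ s, X i ω| ^ q ∂μ ≤ 2 ^ (2 - q) * ∑ i ∈ s, ∫ ω, |X i ω| ^ q ∂μ := by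
  induction s using Finset.cons_induction with
  | empty => simp [Real.zero_rpow (by linarith : q ≠ 0)]
  | cons a s ha ih =>
    have hindep : IndepFun (fun ω => ∑ i ∈ s, X i ω) (X a) μ := by
      simpa only [← Finset.sum_apply] using
        hind.indepFun_finsetSum_of_notMem₀ (fun i => (hX i).aemeasurable) ha
    have hstep := integral_abs_add_rpow_le_of_indepFun hq1 hq2
      (memLp_finsetSum s fun i _ => hX i) (hX a) hindep (hX0 a)
    have hone : (1:ℝ) ≤ 2 ^ (2 - q) := Real.one_le_rpow one_le_two (by linarith)
    have hnonneg : 0 ≤ ∫ ω, |X a ω| ^ q ∂μ := integral_nonneg fun ω => by positivity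
    simp only [Finset.sum_cons, add_comm (X a _)]
    nlinarith

lemma eLpNorm_mean_le_of_iIndepFun {ι : Type*} [Fintype ι] [Nonempty ι] (hq1 : 1 < q)
    (hq2 : q ≤ 2) {X : ι → Ω → ℝ} (hX : ∀ i, MemLp (X i) (ENNReal.ofReal q) μ)
    (hX0 : ∀ i, ∫ ω, X i ω ∂μ = 0) (hind : iIndepFun X μ) {B : ℝ} (hB : 0 ≤ B)
    (hXB : ∀ i, eLpNorm (X i) (ENNReal.ofReal q) μ ≤ ENNReal.ofReal B) :
    eLpNorm (fun ω => (Fintype.card ι : ℝ)⁻¹ * ∑ i, X i ω) (ENNReal.ofReal q) μ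
      ≤ ENNReal.ofReal (2 ^ (2 / q - 1) * (Fintype.card ι : ℝ) ^ (-(1 - 1 / q)) * B) := by
  have hq0 : 0 < q := by linarith
  set n : ℝ := (Fintype.card ι : ℝ)
  have hn : 0 < n := by positivity
  have hmean : MemLp (fun ω => n⁻¹ * ∑ i, X i ω) (ENNReal.ofReal q) μ :=
    (memLp_finsetSum _ fun i _ => hX i).const_mul _
  rw [hmean.eLpNorm_le_ofReal_iff hq0 (by positivity)]
  have hmoment (i : ι) : ∫ ω, |X i ω| ^ q ∂μ ≤ B ^ q :=
    ((hX i).eLpNorm_le_ofReal_iff hq0 hB).1 (hXB i)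
  calc ∫ ω, |n⁻¹ * ∑ i, X i ω| ^ q ∂μ = n⁻¹ ^ q * ∫ ω, |∑ i, X i ω| ^ q ∂μ := by
        simp only [abs_mul, abs_inv, abs_of_pos hn,
          Real.mul_rpow (inv_nonneg.2 hn.le) (abs_nonneg _), integral_const_mul]
    _ ≤ n⁻¹ ^ q * (2 ^ (2 - q) * ∑ i : ι, B ^ q) := by
        gcongr
        exact (integral_abs_sum_rpow_le_of_iIndepFun hq1 hq2 hX hX0 hind _).trans
          (by gcongr with i; exact hmoment i)
    _ = (2 ^ (2 / q - 1) * n ^ (-(1 - 1 / q)) * B) ^ q := by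
        rw [Real.mul_rpow (by positivity) hB, Real.mul_rpow (by positivity) (by positivity),
          ← Real.rpow_mul zero_le_two, ← Real.rpow_mul hn.le, Finset.sum_const, Finset.card_univ,
          nsmul_eq_mul, Real.inv_rpow hn.le]
        rw [show (2 / q - 1) * q = 2 - q by field_simp, show -(1 - 1 / q) * q = 1 - q by
          field_simp; ring, Real.rpow_sub hn, Real.rpow_one]
        field_simp
        ring

lemma eLpNorm_mean_comp_le_of_identDistrib {ι : Type*} [Fintype ι] [Nonempty ι] (hq1 : 1 < q)
    (hq2 : q ≤ 2) {Y : Ω → ℝ} {Ys : ι → Ω → ℝ} (hind : iIndepFun Ys μ)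
    (hid : ∀ i, IdentDistrib (Ys i) Y μ μ) {g : ℝ → ℝ} (hg : Measurable g)
    (hg0 : ∫ ω, g (Y ω) ∂μ = 0) {B : ℝ} (hB : 0 ≤ B)
    (hgB : eLpNorm (fun ω => g (Y ω)) (ENNReal.ofReal q) μ ≤ ENNReal.ofReal B) :
    eLpNorm (fun ω => (Fintype.card ι : ℝ)⁻¹ * ∑ i, g (Ys i ω)) (ENNReal.ofReal q) μ
      ≤ ENNReal.ofReal (2 ^ (2 / q - 1) * (Fintype.card ι : ℝ) ^ (-(1 - 1 / q)) * B) := by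
  have hidg (i : ι) := (hid i).comp hg
  have hgY : MemLp (fun ω => g (Y ω)) (ENNReal.ofReal q) μ :=
    ⟨(hg.comp_aemeasurable (hid (Classical.arbitrary ι)).aemeasurable_snd).aestronglyMeasurable,
       hgB.trans_lt ENNReal.ofReal_lt_top⟩
  exact eLpNorm_mean_le_of_iIndepFun hq1 hq2 (fun i => (hidg i).symm.memLp_snd hgY)
    (fun i => (hidg i).integral_eq.trans hg0) (hind.comp _ fun _ => hg) hB
    (fun i => ((hidg i).eLpNorm_eq _).trans_le hgB)

end Moments

lemma abs_mean_abs_sub_mean_sub_le {ι : Type*} [Fintype ι] [Nonempty ι] (y : ι → ℝ) (c ρ : ℝ) :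
    |(Fintype.card ι : ℝ)⁻¹ * ∑ i, |y i - (Fintype.card ι : ℝ)⁻¹ * ∑ j, y j| - ρ|
      ≤ |(Fintype.card ι : ℝ)⁻¹ * ∑ i, (y i - c)|
        + |(Fintype.card ι : ℝ)⁻¹ * ∑ i, (|y i - c| - ρ)| := by
  set n : ℝ := (Fintype.card ι : ℝ)
  have hn : n ≠ 0 := by positivity
  set M := n⁻¹ * ∑ j, y j
  have hmean_const (a : ℝ) : n⁻¹ * ∑ _i : ι, a = a := by
    rw [Finset.sum_const, Finset.card_univ, nsmul_eq_mul, inv_mul_cancel_left₀ hn]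
  have hM : n⁻¹ * ∑ i, (y i - c) = M - c := by
    rw [Finset.sum_sub_distrib, mul_sub, hmean_const]
  have hsplit : n⁻¹ * ∑ i, |y i - M| - ρ
      = n⁻¹ * ∑ i, (|y i - M| - |y i - c|) + n⁻¹ * ∑ i, (|y i - c| - ρ) := by
    rw [← mul_add, ← Finset.sum_add_distrib]
    simp only [sub_add_sub_cancel]
    rw [Finset.sum_sub_distrib, mul_sub, hmean_const]
  have hshift : |n⁻¹ * ∑ i, (|y i - M| - |y i - c|)| ≤ |M - c| :=
    calc |n⁻¹ * ∑ i, (|y i - M| - |y i - c|)| ≤ n⁻¹ * ∑ i, |(|y i - M| - |y i - c|)| := by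
          rw [abs_mul, abs_inv, abs_of_pos (by positivity : 0 < n)]
          gcongr
          exact Finset.abs_sum_le_sum_abs _ _
      _ ≤ n⁻¹ * ∑ _i : ι, |M - c| := by
          refine mul_le_mul_of_nonneg_left (Finset.sum_le_sum fun i _ => ?_) (by positivity)
          calc |(|y i - M| - |y i - c|)| ≤ |(y i - M) - (y i - c)| := abs_abs_sub_abs_le_abs_sub _ _
            _ = |M - c| := by rw [show y i - M - (y i - c) = -(M - c) by ring, abs_neg]
      _ = |M - c| := hmean_const _
  rw [hsplit, hM]
  exact (abs_add_le _ _).trans (add_le_add hshift le_rfl)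

lemma two_rpow_mul_one_add_two_mul_le {q : ℝ} (hq : 1 ≤ q) {K : ℝ} (hK : 1 ≤ K) :
    (2 : ℝ) ^ (2 / q - 1) * (1 + 2 * K) ≤ 6 * K := by
  have h2 : (2 : ℝ) ^ (2 / q - 1) ≤ 2 := by
    calc (2 : ℝ) ^ (2 / q - 1) ≤ 2 ^ (1 : ℝ) :=
          Real.rpow_le_rpow_of_exponent_le one_le_two
            (by rw [sub_le_iff_le_add, div_le_iff₀ (by linarith)]; linarith)
      _ = 2 := Real.rpow_one 2
  nlinarith

theorem empirical_mad_error_general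
    {Ω : Type*} [MeasurableSpace Ω] (μ : Measure Ω) [IsProbabilityMeasure μ]
    (q : ℝ) (hq1 : 1 < q) (hq2 : q ≤ 2) (K : ℝ) (hK : 1 ≤ K)
    (Y : Ω → ℝ) (hYq : MemLp Y (ENNReal.ofReal q) μ)
    (hcone : eLpNorm (fun ω => Y ω - ∫ ω', Y ω' ∂μ) (ENNReal.ofReal q) μ
      ≤ ENNReal.ofReal K * eLpNorm (fun ω => Y ω - ∫ ω', Y ω' ∂μ) 1 μ)
    (m : ℕ) (hm : 0 < m) (Ys : Fin m → Ω → ℝ)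
    (hindep : iIndepFun Ys μ)
    (hid : ∀ i, IdentDistrib (Ys i) Y μ μ) :
    eLpNorm (fun ω => (m : ℝ)⁻¹ * (∑ i, |Ys i ω - (m : ℝ)⁻¹ * ∑ j, Ys j ω|)
          - (eLpNorm (fun ω' => Y ω' - ∫ ω'', Y ω'' ∂μ) 1 μ).toReal)
        (ENNReal.ofReal q) μ
      ≤ ENNReal.ofReal ((2 : ℝ) ^ (2 / q - 1) * (1 + 2 * K) * (m : ℝ) ^ (-(1 - 1 / q))
          * (eLpNorm (fun ω' => Y ω' - ∫ ω'', Y ω'' ∂μ) 1 μ).toReal) ∧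
    ENNReal.ofReal ((2 : ℝ) ^ (2 / q - 1) * (1 + 2 * K) * (m : ℝ) ^ (-(1 - 1 / q))
          * (eLpNorm (fun ω' => Y ω' - ∫ ω'', Y ω'' ∂μ) 1 μ).toReal)
      ≤ ENNReal.ofReal (6 * K * (m : ℝ) ^ (-(1 - 1 / q))
          * (eLpNorm (fun ω' => Y ω' - ∫ ω'', Y ω'' ∂μ) 1 μ).toReal) := by
  have hp : (1 : ℝ≥0∞) ≤ ENNReal.ofReal q := by simpa using hq1.le
  have : Nonempty (Fin m) := ⟨⟨0, hm⟩⟩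
  set c := ∫ ω, Y ω ∂μ
  set ρ := (eLpNorm (fun ω => Y ω - c) 1 μ).toReal
  have hYc : Integrable (fun ω => Y ω - c) μ := (hYq.integrable hp).sub (integrable_const c)
  have hρ0 : 0 ≤ ρ := ENNReal.toReal_nonneg
  have hcone' : eLpNorm (fun ω => Y ω - c) (ENNReal.ofReal q) μ ≤ ENNReal.ofReal (K * ρ) := by
    rwa [ENNReal.ofReal_mul (by linarith),
      ENNReal.ofReal_toReal (memLp_one_iff_integrable.2 hYc).eLpNorm_ne_top]
  have hmean := eLpNorm_mean_comp_le_of_identDistrib hq1 hq2 hindep hid (measurable_sub_const c)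
    (by simp [integral_sub (hYq.integrable hp) (integrable_const c), c]) (by positivity) hcone'
  have hdev := eLpNorm_mean_comp_le_of_identDistrib hq1 hq2 hindep hid (B := (1 + K) * ρ)
    ((measurable_sub_const c).abs.sub_const ρ)
    (by simp [integral_sub hYc.abs (integrable_const ρ), ← hYc.toReal_eLpNorm_one, ρ])
    (by positivity)
    ((eLpNorm_abs_sub_const_le hp hYc.aestronglyMeasurable ρ).trans (by
      rw [Real.enorm_eq_ofReal hρ0, add_mul, one_mul, ENNReal.ofReal_add hρ0 (by positivity),
        add_comm]
      gcongr))
  have hYs (i : Fin m) : AEMeasurable (Ys i) μ := (hid i).aemeasurable_fst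
  have hsplit := fun ω => abs_mean_abs_sub_mean_sub_le (fun i => Ys i ω) c ρ
  simp only [Fintype.card_fin] at hmean hdev hsplit
  refine ⟨?_, ENNReal.ofReal_le_ofReal ?_⟩
  · calc _ ≤ _ := eLpNorm_le_add_of_abs_le hp (by fun_prop) (by fun_prop) hsplit
      _ ≤ _ := add_le_add hmean hdev
      _ = _ := by
        rw [← ENNReal.ofReal_add (by positivity) (by positivity)]
        ring_nf
  · gcongr ?_ * _ * _
    exact two_rpow_mul_one_add_two_mul_le hq1.le hK

/-- **`L_q`-error of the empirical mean absolute deviation** (Lemma 2.8 (a)):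
let `1 = p < q ≤ 2`, `K ≥ 1`, and `Y ∈ 𝒴_{1,q,K}` with `ρ = ‖Y - E Y‖_1`.
For i.i.d. copies `Y_1, …, Y_m` of `Y`, `M̂_m = (1/m) ∑ Y_i` and
`R̂_m = (1/m) ∑ |Y_i - M̂_m|`, one has
`‖R̂_m - ρ‖_q ≤ 2^(2/q-1) * (1+2K) * m^(-(1-1/q)) * ρ ≤ 6K * m^(-(1-1/q)) * ρ`. -/
theorem empirical_mad_error
    {Ω : Type*} [MeasurableSpace Ω] (μ : Measure Ω) [IsProbabilityMeasure μ]
    (q : ℝ) (hq1 : 1 < q) (hq2 : q ≤ 2) (K : ℝ) (hK : 1 ≤ K)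
    (Y : Ω → ℝ) (hYmeas : Measurable Y) (hYq : MemLp Y (ENNReal.ofReal q) μ)
    (hcone : eLpNorm (fun ω => Y ω - ∫ ω', Y ω' ∂μ) (ENNReal.ofReal q) μ
      ≤ ENNReal.ofReal K * eLpNorm (fun ω => Y ω - ∫ ω', Y ω' ∂μ) 1 μ)
    (m : ℕ) (hm : 0 < m) (Ys : Fin m → Ω → ℝ) (hmeas : ∀ i, Measurable (Ys i))
    (hindep : iIndepFun Ys μ)
    (hid : ∀ i, IdentDistrib (Ys i) Y μ μ) :
    eLpNorm (fun ω => (m : ℝ)⁻¹ * (∑ i, |Ys i ω - (m : ℝ)⁻¹ * ∑ j, Ys j ω|)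
          - (eLpNorm (fun ω' => Y ω' - ∫ ω'', Y ω'' ∂μ) 1 μ).toReal)
        (ENNReal.ofReal q) μ
      ≤ ENNReal.ofReal ((2 : ℝ) ^ (2 / q - 1) * (1 + 2 * K) * (m : ℝ) ^ (-(1 - 1 / q))
          * (eLpNorm (fun ω' => Y ω' - ∫ ω'', Y ω'' ∂μ) 1 μ).toReal) ∧
    ENNReal.ofReal ((2 : ℝ) ^ (2 / q - 1) * (1 + 2 * K) * (m : ℝ) ^ (-(1 - 1 / q))
          * (eLpNorm (fun ω' => Y ω' - ∫ ω'', Y ω'' ∂μ) 1 μ).toReal)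
      ≤ ENNReal.ofReal (6 * K * (m : ℝ) ^ (-(1 - 1 / q))
          * (eLpNorm (fun ω' => Y ω' - ∫ ω'', Y ω'' ∂μ) 1 μ).toReal) :=
  empirical_mad_error_general μ q hq1 hq2 K hK Y hYq hcone m hm Ys hindep hid
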